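/- A lattice triangle with vertices v₀, v₁, v₂ ∈ ℤ² has Euclidean area 1/2 if and only if the only lattice points in its closed convex hull are its three vertices. -/

import Mathlib

/-- The determinant of the matrix with rows `v₁ - v₀` and `v₂ - v₀`. -/
def latticeDet (v₀ v₁ v₂ : ℤ × ℤ) : ℤ :=
  (v₁.1 - v₀.1) * (v₂.2 - v₀.2) - (v₁.2 - v₀.2) * (v₂.1 - v₀.1)

/-- Embedding of the lattice into the plane. -/
def toPlane (p : ℤ × ℤ) : ℝ × ℝ := ((p.1 : ℝ), (p.2 : ℝ))

lemma forward_aux (v₀ v₁ v₂ : ℤ × ℤ)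
    (h1 : |latticeDet v₀ v₁ v₂| = 1) (p : ℤ × ℤ)
    (hp : toPlane p ∈ convexHull ℝ ({toPlane v₀, toPlane v₁, toPlane v₂} : Set (ℝ × ℝ))) :
    p = v₀ ∨ p = v₁ ∨ p = v₂ := by
  set a := v₁.1 - v₀.1 with ha
  set b := v₁.2 - v₀.2 with hb
  set c := v₂.1 - v₀.1 with hc
  set d := v₂.2 - v₀.2 with hd
  set D := a * d - b * c with hD
  have hDdef : latticeDet v₀ v₁ v₂ = D := rfl
  rw [hDdef] at h1
  have hDz : D ≠ 0 := by intro h; rw [h] at h1; simp at h1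
  have hDne : (D:ℝ) ≠ 0 := by exact_mod_cast hDz
  set f : ℝ × ℝ → ℝ :=
    fun u => ((d:ℝ) * (u.1 - (v₀.1:ℝ)) - (c:ℝ) * (u.2 - (v₀.2:ℝ))) / (D:ℝ) with hf
  set g : ℝ × ℝ → ℝ :=
    fun u => (-(b:ℝ) * (u.1 - (v₀.1:ℝ)) + (a:ℝ) * (u.2 - (v₀.2:ℝ))) / (D:ℝ) with hg
  have hDcast : (D:ℝ) = (a:ℝ) * d - (b:ℝ) * c := by rw [hD]; push_cast; ring
  have hacast : (a:ℝ) = (v₁.1:ℝ) - (v₀.1:ℝ) := by rw [ha]; push_cast; ring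
  have hbcast : (b:ℝ) = (v₁.2:ℝ) - (v₀.2:ℝ) := by rw [hb]; push_cast; ring
  have hccast : (c:ℝ) = (v₂.1:ℝ) - (v₀.1:ℝ) := by rw [hc]; push_cast; ring
  have hdcast : (d:ℝ) = (v₂.2:ℝ) - (v₀.2:ℝ) := by rw [hd]; push_cast; ring
  have hTconv : Convex ℝ {u : ℝ × ℝ | 0 ≤ f u ∧ 0 ≤ g u ∧ f u + g u ≤ 1} := by
    intro u hu v hv θ₁ θ₂ hθ₁ hθ₂ hθ
    have h2 : θ₂ = 1 - θ₁ := by linarith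
    subst h2
    have hfuv : f (θ₁ • u + (1 - θ₁) • v) = θ₁ * f u + (1 - θ₁) * f v := by
      simp only [hf, Prod.fst_add, Prod.snd_add, Prod.smul_fst, Prod.smul_snd, smul_eq_mul]
      field_simp
      ring
    have hguv : g (θ₁ • u + (1 - θ₁) • v) = θ₁ * g u + (1 - θ₁) * g v := by
      simp only [hg, Prod.fst_add, Prod.snd_add, Prod.smul_fst, Prod.smul_snd, smul_eq_mul]
      field_simp
      ring
    obtain ⟨hu1, hu2, hu3⟩ := hu
    obtain ⟨hv1, hv2, hv3⟩ := hv
    refine ⟨?_, ?_, ?_⟩ <;> simp only [hfuv, hguv]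
    · nlinarith [mul_nonneg hθ₁ hu1, mul_nonneg hθ₂ hv1]
    · nlinarith [mul_nonneg hθ₁ hu2, mul_nonneg hθ₂ hv2]
    · nlinarith [mul_le_mul_of_nonneg_left hu3 hθ₁, mul_le_mul_of_nonneg_left hv3 hθ₂]
  have hfv0 : f (toPlane v₀) = 0 := by simp [hf, toPlane]
  have hgv0 : g (toPlane v₀) = 0 := by simp [hg, toPlane]
  have hfv1 : f (toPlane v₁) = 1 := by
    simp only [hf, toPlane]
    rw [← hacast, ← hbcast, show (d:ℝ) * a - c * b = (D:ℝ) from by rw [hDcast]; ring]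
    exact div_self hDne
  have hgv1 : g (toPlane v₁) = 0 := by
    simp only [hg, toPlane]
    rw [← hacast, ← hbcast, show -(b:ℝ) * a + a * b = 0 from by ring]
    simp
  have hfv2 : f (toPlane v₂) = 0 := by
    simp only [hf, toPlane]
    rw [← hccast, ← hdcast, show (d:ℝ) * c - c * d = 0 from by ring]
    simp
  have hgv2 : g (toPlane v₂) = 1 := by
    simp only [hg, toPlane]
    rw [← hccast, ← hdcast, show -(b:ℝ) * c + a * d = (D:ℝ) from by rw [hDcast]; ring]
    exact div_self hDne
  have hsub : ({toPlane v₀, toPlane v₁, toPlane v₂} : Set (ℝ × ℝ)) ⊆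
      {u : ℝ × ℝ | 0 ≤ f u ∧ 0 ≤ g u ∧ f u + g u ≤ 1} := by
    intro u hu
    rcases hu with h | h | h <;> subst h <;>
      simp [Set.mem_setOf_eq, hfv0, hgv0, hfv1, hgv1, hfv2, hgv2]
  have hpT := convexHull_min hsub hTconv hp
  obtain ⟨hp1, hp2, hp3⟩ := hpT
  set B := d * (p.1 - v₀.1) - c * (p.2 - v₀.2) with hB
  set C := -b * (p.1 - v₀.1) + a * (p.2 - v₀.2) with hC
  have hfB : f (toPlane p) = (B:ℝ) / (D:ℝ) := by
    simp only [hf, toPlane]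
    congr 1
    rw [hB]; push_cast; ring
  have hgC : g (toPlane p) = (C:ℝ) / (D:ℝ) := by
    simp only [hg, toPlane]
    congr 1
    rw [hC]; push_cast; ring
  rw [hfB] at hp1 hp3
  rw [hgC] at hp2 hp3
  have k1 : D * (p.1 - v₀.1) = B * a + C * c := by rw [hB, hC, hD]; ring
  have k2 : D * (p.2 - v₀.2) = B * b + C * d := by rw [hB, hC, hD]; ring
  have hD1 : D = 1 ∨ D = -1 := abs_eq (by norm_num : (0:ℤ) ≤ 1) |>.mp h1
  have hDD : D * D = 1 := by rcases hD1 with h | h <;> rw [h] <;> norm_num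
  have hDDr : (D:ℝ) * (D:ℝ) = 1 := by exact_mod_cast hDD
  have hBD : (B:ℝ) / (D:ℝ) = ((B * D : ℤ) : ℝ) := by
    push_cast
    rw [div_eq_iff hDne, mul_assoc, hDDr, mul_one]
  have hCD : (C:ℝ) / (D:ℝ) = ((C * D : ℤ) : ℝ) := by
    push_cast
    rw [div_eq_iff hDne, mul_assoc, hDDr, mul_one]
  rw [hBD] at hp1 hp3
  rw [hCD] at hp2 hp3
  have e1 : 0 ≤ B * D := by exact_mod_cast hp1
  have e2 : 0 ≤ C * D := by exact_mod_cast hp2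
  have e3 : B * D + C * D ≤ 1 := by exact_mod_cast hp3
  set m := B * D with hm
  set n := C * D with hn
  have hBm : B = m * D := by rw [hm, mul_assoc, hDD, mul_one]
  have hCn : C = n * D := by rw [hn, mul_assoc, hDD, mul_one]
  have k1' : p.1 - v₀.1 = m * a + n * c := by
    apply mul_left_cancel₀ hDz
    rw [k1, hBm, hCn]; ring
  have k2' : p.2 - v₀.2 = m * b + n * d := by
    apply mul_left_cancel₀ hDz
    rw [k2, hBm, hCn]; ring
  have hmn : (m = 0 ∧ n = 0) ∨ (m = 1 ∧ n = 0) ∨ (m = 0 ∧ n = 1) := by omega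
  rcases hmn with ⟨f1, f2⟩ | ⟨f1, f2⟩ | ⟨f1, f2⟩ <;> rw [f1, f2] at k1' k2' <;>
    simp only [zero_mul, one_mul, add_zero, zero_add] at k1' k2'
  · left; rw [Prod.ext_iff]; omega
  · right; left; rw [Prod.ext_iff]; omega
  · right; right; rw [Prod.ext_iff]; omega

lemma mem_hull3 {x y z u : ℝ × ℝ} {α β γ : ℝ} (hα : 0 ≤ α) (hβ : 0 ≤ β)
    (hγ : 0 ≤ γ) (hsum : α + β + γ = 1) (hu : u = α • x + β • y + γ • z) :
    u ∈ convexHull ℝ ({x, y, z} : Set (ℝ × ℝ)) := by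
  have hx : x ∈ convexHull ℝ ({x, y, z} : Set (ℝ × ℝ)) :=
    subset_convexHull ℝ _ (by simp)
  have hy : y ∈ convexHull ℝ ({x, y, z} : Set (ℝ × ℝ)) :=
    subset_convexHull ℝ _ (by simp)
  have hz : z ∈ convexHull ℝ ({x, y, z} : Set (ℝ × ℝ)) :=
    subset_convexHull ℝ _ (by simp)
  have hc := convex_convexHull ℝ ({x, y, z} : Set (ℝ × ℝ))
  rcases eq_or_lt_of_le (by positivity : (0:ℝ) ≤ β + γ) with h0 | h0
  · have hβ0 : β = 0 := by linarith
    have hγ0 : γ = 0 := by linarith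
    have hα1 : α = 1 := by linarith
    rw [hu, hβ0, hγ0, hα1]
    simpa using hx
  · have hv : (β/(β+γ)) • y + (γ/(β+γ)) • z ∈ convexHull ℝ ({x, y, z} : Set (ℝ × ℝ)) :=
      hc hy hz (by positivity) (by positivity) (by field_simp)
    have hkey : u = α • x + (β+γ) • ((β/(β+γ)) • y + (γ/(β+γ)) • z) := by
      rw [hu, smul_add, smul_smul, smul_smul, mul_div_cancel₀ _ h0.ne',
        mul_div_cancel₀ _ h0.ne', add_assoc]
    rw [hkey]
    exact hc hx hv hα h0.le (by linarith)

lemma backward_aux (v₀ v₁ v₂ : ℤ × ℤ) (hnc : latticeDet v₀ v₁ v₂ ≠ 0)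
    (H : ∀ p : ℤ × ℤ, toPlane p ∈ convexHull ℝ ({toPlane v₀, toPlane v₁, toPlane v₂} :
      Set (ℝ × ℝ)) → p = v₀ ∨ p = v₁ ∨ p = v₂) :
    |latticeDet v₀ v₁ v₂| = 1 := by
  set a := v₁.1 - v₀.1 with ha
  set b := v₁.2 - v₀.2 with hb
  set c := v₂.1 - v₀.1 with hc
  set d := v₂.2 - v₀.2 with hd
  set D := a * d - b * c with hD
  have hDdef : latticeDet v₀ v₁ v₂ = D := rfl
  rw [hDdef] at hnc ⊢
  set M := |D| with hM
  have hM1 : 1 ≤ M := Int.one_le_abs hnc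
  by_contra hne
  have hM2 : 2 ≤ M := by omega
  have hMD : M ∣ D := (abs_dvd _ _).mpr dvd_rfl
  have hDM : D ∣ M := (dvd_abs _ _).mpr dvd_rfl
  have hMz : M ≠ 0 := by omega
  have hM0 : 0 < M := by omega
  have hMr : (0:ℝ) < (M:ℝ) := by exact_mod_cast hM0
  have indep : ∀ x y : ℤ, x * a + y * c = 0 → x * b + y * d = 0 → x = 0 ∧ y = 0 := by
    intro x y h1 h2
    have hx : x * D = 0 := by rw [hD]; linear_combination d * h1 - c * h2
    have hy : y * D = 0 := by rw [hD]; linear_combination (-b) * h1 + a * h2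
    exact ⟨(mul_eq_zero.mp hx).resolve_right hnc, (mul_eq_zero.mp hy).resolve_right hnc⟩
  -- find B C
  have key : ∃ B C : ℤ, D ∣ (B * a + C * c) ∧ D ∣ (B * b + C * d) ∧ ¬(D ∣ B ∧ D ∣ C) := by
    by_cases h1 : D ∣ d ∧ D ∣ b
    · by_cases h2 : D ∣ c ∧ D ∣ a
      · exfalso
        obtain ⟨⟨d', hd'⟩, ⟨b', hb'⟩⟩ := h1
        obtain ⟨⟨c', hc'⟩, ⟨a', ha'⟩⟩ := h2
        have : D * 1 = D * (D * (a' * d' - b' * c')) := by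
          rw [hD]
          nth_rewrite 1 [ha', hb', hc', hd']
          ring
        have hu : 1 = D * (a' * d' - b' * c') := mul_left_cancel₀ hnc this
        have : D ∣ 1 := Dvd.intro _ hu.symm
        rcases Int.isUnit_iff.mp (isUnit_of_dvd_one this) with h | h <;>
          exact hne (by rw [hM, h]; norm_num)
      · refine ⟨-c, a, ⟨0, by ring⟩, ⟨1, by rw [hD]; ring⟩, ?_⟩
        intro ⟨hh1, hh2⟩
        exact h2 ⟨(dvd_neg).mp hh1, hh2⟩
    · refine ⟨d, -b, ⟨1, by rw [hD]; ring⟩, ⟨0, by ring⟩, ?_⟩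
      intro ⟨hh1, hh2⟩
      exact h1 ⟨hh1, (dvd_neg).mp hh2⟩
  obtain ⟨B, C, key1, key2, key3⟩ := key
  set s := B % M with hs
  set t := C % M with ht
  have hs0 : 0 ≤ s := Int.emod_nonneg B hMz
  have ht0 : 0 ≤ t := Int.emod_nonneg C hMz
  have hsM : s < M := Int.emod_lt_of_pos B hM0
  have htM : t < M := Int.emod_lt_of_pos C hM0
  have hBs : M ∣ B - s := ⟨B / M, by rw [hs, Int.emod_def]; ring⟩
  have hCt : M ∣ C - t := ⟨C / M, by rw [ht, Int.emod_def]; ring⟩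
  have hst0 : ¬(s = 0 ∧ t = 0) := by
    rintro ⟨h1, h2⟩
    rw [h1] at hBs; rw [h2] at hCt
    simp at hBs hCt
    exact key3 ⟨dvd_trans hDM hBs, dvd_trans hDM hCt⟩
  have div1 : M ∣ s * a + t * c := by
    have h1 : D ∣ (B - s) * a := Dvd.dvd.mul_right (dvd_trans hDM hBs) a
    have h2 : D ∣ (C - t) * c := Dvd.dvd.mul_right (dvd_trans hDM hCt) c
    have h3 : D ∣ s * a + t * c := by
      have := (key1.sub h1).sub h2
      have he : B * a + C * c - (B - s) * a - (C - t) * c = s * a + t * c := by ring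
      rwa [he] at this
    exact dvd_trans hMD h3
  have div2 : M ∣ s * b + t * d := by
    have h1 : D ∣ (B - s) * b := Dvd.dvd.mul_right (dvd_trans hDM hBs) b
    have h2 : D ∣ (C - t) * d := Dvd.dvd.mul_right (dvd_trans hDM hCt) d
    have h3 : D ∣ s * b + t * d := by
      have := (key2.sub h1).sub h2
      have he : B * b + C * d - (B - s) * b - (C - t) * d = s * b + t * d := by ring
      rwa [he] at this
    exact dvd_trans hMD h3
  obtain ⟨s', t', hs'0, ht'0, hsum', hdvd1, hdvd2, hne0, hneA, hneB⟩ :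
      ∃ s' t' : ℤ, 0 ≤ s' ∧ 0 ≤ t' ∧ s' + t' ≤ M ∧ (M ∣ s' * a + t' * c) ∧
        (M ∣ s' * b + t' * d) ∧ ¬(s' = 0 ∧ t' = 0) ∧ ¬(s' = M ∧ t' = 0) ∧
        ¬(s' = 0 ∧ t' = M) := by
    by_cases hcase : s + t ≤ M
    · exact ⟨s, t, hs0, ht0, hcase, div1, div2, hst0, by omega, by omega⟩
    · refine ⟨M - s, M - t, by omega, by omega, by omega, ?_, ?_, by omega, by omega, by omega⟩
      · have : (M - s) * a + (M - t) * c = M * (a + c) - (s * a + t * c) := by ring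
        rw [this]
        exact dvd_sub (Dvd.intro _ rfl) div1
      · have : (M - s) * b + (M - t) * d = M * (b + d) - (s * b + t * d) := by ring
        rw [this]
        exact dvd_sub (Dvd.intro _ rfl) div2
  obtain ⟨k₁, hk₁⟩ := hdvd1
  obtain ⟨k₂, hk₂⟩ := hdvd2
  set p : ℤ × ℤ := (v₀.1 + k₁, v₀.2 + k₂) with hp
  have hk₁r : (s':ℝ) * a + (t':ℝ) * c = (M:ℝ) * (k₁:ℝ) := by exact_mod_cast hk₁
  have hk₂r : (s':ℝ) * b + (t':ℝ) * d = (M:ℝ) * (k₂:ℝ) := by exact_mod_cast hk₂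
  have hacast : (a:ℝ) = (v₁.1:ℝ) - (v₀.1:ℝ) := by rw [ha]; push_cast; ring
  have hbcast : (b:ℝ) = (v₁.2:ℝ) - (v₀.2:ℝ) := by rw [hb]; push_cast; ring
  have hccast : (c:ℝ) = (v₂.1:ℝ) - (v₀.1:ℝ) := by rw [hc]; push_cast; ring
  have hdcast : (d:ℝ) = (v₂.2:ℝ) - (v₀.2:ℝ) := by rw [hd]; push_cast; ring
  have hs'r : (0:ℝ) ≤ (s':ℝ) := by exact_mod_cast hs'0
  have ht'r : (0:ℝ) ≤ (t':ℝ) := by exact_mod_cast ht'0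
  have hsumr : (s':ℝ) + (t':ℝ) ≤ (M:ℝ) := by exact_mod_cast hsum'
  have hmem : toPlane p ∈ convexHull ℝ ({toPlane v₀, toPlane v₁, toPlane v₂} :
      Set (ℝ × ℝ)) := by
    refine mem_hull3 (α := 1 - (s':ℝ)/(M:ℝ) - (t':ℝ)/(M:ℝ)) (β := (s':ℝ)/(M:ℝ))
      (γ := (t':ℝ)/(M:ℝ)) ?_ ?_ ?_ (by ring) ?_
    · rw [sub_sub, ← add_div, sub_nonneg]
      exact (div_le_one hMr).mpr hsumr
    · positivity
    · positivity
    · rw [Prod.ext_iff]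
      constructor
      · show ((p.1 : ℤ) : ℝ) = _
        simp only [toPlane, Prod.fst_add, Prod.smul_fst, smul_eq_mul, hp]
        push_cast
        rw [show (v₁.1:ℝ) = (v₀.1:ℝ) + a by rw [hacast]; ring,
          show (v₂.1:ℝ) = (v₀.1:ℝ) + c by rw [hccast]; ring]
        field_simp
        linear_combination (-1 : ℝ) * hk₁r
      · show ((p.2 : ℤ) : ℝ) = _
        simp only [toPlane, Prod.snd_add, Prod.smul_snd, smul_eq_mul, hp]
        push_cast
        rw [show (v₁.2:ℝ) = (v₀.2:ℝ) + b by rw [hbcast]; ring,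
          show (v₂.2:ℝ) = (v₀.2:ℝ) + d by rw [hdcast]; ring]
        field_simp
        linear_combination (-1 : ℝ) * hk₂r
  rcases H p hmem with hv | hv | hv
  · rw [hp, Prod.ext_iff] at hv
    have e1 : k₁ = 0 := by omega
    have e2 : k₂ = 0 := by omega
    rw [e1] at hk₁; rw [e2] at hk₂
    simp at hk₁ hk₂
    exact hne0 (indep s' t' hk₁ hk₂)
  · rw [hp, Prod.ext_iff] at hv
    have e1 : k₁ = a := by omega
    have e2 : k₂ = b := by omega
    rw [e1] at hk₁; rw [e2] at hk₂
    have h1 : (s' - M) * a + t' * c = 0 := by linear_combination hk₁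
    have h2 : (s' - M) * b + t' * d = 0 := by linear_combination hk₂
    obtain ⟨e3, e4⟩ := indep _ _ h1 h2
    exact hneA ⟨by omega, e4⟩
  · rw [hp, Prod.ext_iff] at hv
    have e1 : k₁ = c := by omega
    have e2 : k₂ = d := by omega
    rw [e1] at hk₁; rw [e2] at hk₂
    have h1 : s' * a + (t' - M) * c = 0 := by linear_combination hk₁
    have h2 : s' * b + (t' - M) * d = 0 := by linear_combination hk₂
    obtain ⟨e3, e4⟩ := indep _ _ h1 h2
    exact hneB ⟨e3, by omega⟩

theorem area_half_iff_no_extra_lattice_points (v₀ v₁ v₂ : ℤ × ℤ)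
    (hnc : latticeDet v₀ v₁ v₂ ≠ 0) :
    ((|latticeDet v₀ v₁ v₂| : ℚ) / 2 = 1 / 2) ↔
      ∀ p : ℤ × ℤ, toPlane p ∈ convexHull ℝ ({toPlane v₀, toPlane v₁, toPlane v₂} :
        Set (ℝ × ℝ)) → p = v₀ ∨ p = v₁ ∨ p = v₂ := by
  have hiff : ((|latticeDet v₀ v₁ v₂| : ℚ) / 2 = 1 / 2) ↔ |latticeDet v₀ v₁ v₂| = 1 := by
    constructor
    · intro h
      have h1 : |((latticeDet v₀ v₁ v₂ : ℤ) : ℚ)| = 1 := by linarith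
      rw [← Int.cast_abs] at h1
      exact_mod_cast h1
    · intro h
      rw [← Int.cast_abs, h]
      norm_num
  rw [hiff]
  constructor
  · intro h p hp
    exact forward_aux v₀ v₁ v₂ h p hp
  · intro H
    exact backward_aux v₀ v₁ v₂ hnc H
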